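/- Bialgebra compatibility of PQSym: let a be a parking function of length k, b a parking function of length l, n = k + l, and let 0 ≤ j ≤ n, e ∈ PF_j, f ∈ PF_{n−j}. Then the number, counted with shuffle multiplicity, of words c in the shifted shuffle a ⋒ b such that Park(c_1⋯c_j) = e and Park(c_{j+1}⋯c_n) = f, equals Σ_i M_1(i)·M_2(i), where i ranges over max(0, j−l) ≤ i ≤ min(j, k), M_1(i) is the multiplicity of e in the shifted shuffle Park(a_1⋯a_i) ⋒ Park(b_1⋯b_{j−i}), and M_2(i) is the multiplicity of f in the shifted shuffle Park(a_{i+1}⋯a_k) ⋒ Park(b_{j−i+1}⋯b_l). (This expresses Δ(F_a F_b) = Δ(F_a)Δ(F_b), i.e. that PQSym is a bialgebra.) -/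

import Mathlib

open List

/-- `sortW w` is the nondecreasing rearrangement `w↑` of the word `w`. -/
def sortW (w : List ℕ) : List ℕ := w.mergeSort (fun a b => decide (a ≤ b))

/-- `a` is a parking function: a word over the positive integers whose
nondecreasing rearrangement `a↑ = a'₁ ⋯ a'ₙ` satisfies `a'ᵢ ≤ i` for all `i`. -/
def IsPF (a : List ℕ) : Prop :=
  (∀ x ∈ a, 1 ≤ x) ∧ ∀ i, i < a.length → (sortW a).getD i 0 ≤ i + 1

/-- `dW w = min { i ≥ 1 : #{j : wⱼ ≤ i} < i }`. -/
noncomputable def dW (w : List ℕ) : ℕ := sInf {i | 1 ≤ i ∧ w.countP (fun x => decide (x ≤ i)) < i}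

/-- Decrement by one every letter strictly greater than `d`. -/
def decAbove (d : ℕ) (w : List ℕ) : List ℕ := w.map (fun x => if d < x then x - 1 else x)

lemma mem_dW_set (w : List ℕ) :
    (w.length + 1) ∈ {i | 1 ≤ i ∧ w.countP (fun x => decide (x ≤ i)) < i} := by
  refine ⟨by omega, ?_⟩
  have : w.countP (fun x => decide (x ≤ w.length + 1)) ≤ w.length := List.countP_le_length
  omega

lemma decAbove_sum_lt {w : List ℕ} (h : dW w ≠ w.length + 1) :
    (decAbove (dW w) w).sum < w.sum := by
  have hmem : 1 ≤ dW w ∧ w.countP (fun x => decide (x ≤ dW w)) < dW w := Nat.sInf_mem (⟨_, mem_dW_set w⟩ : Set.Nonempty _)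
  have hle : dW w ≤ w.length + 1 := Nat.sInf_le (mem_dW_set w)
  obtain ⟨h1, h2⟩ := hmem
  have hlen : dW w ≤ w.length := by omega
  -- there is a letter strictly greater than `dW w`
  have hx : ∃ x ∈ w, ¬ (x ≤ dW w) := by
    by_contra hc
    push_neg at hc
    have : w.countP (fun x => decide (x ≤ dW w)) = w.length := by
      rw [List.countP_eq_length]
      intro a ha
      simpa using hc a ha
    omega
  obtain ⟨x, hxw, hxd⟩ := hx
  have := List.sum_lt_sum (l := w) (f := fun y => if dW w < y then y - 1 else y) (g := id)
    (fun i _ => by dsimp; split <;> omega)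
    ⟨x, hxw, by dsimp; rw [if_pos (by omega)]; omega⟩
  simpa [decAbove] using this

/-- The parkization `Park(w)` of a word `w` over the positive integers. -/
noncomputable def park (w : List ℕ) : List ℕ :=
  if h : dW w = w.length + 1 then w
  else
    have : (decAbove (dW w) w).sum < w.sum := decAbove_sum_lt h
    park (decAbove (dW w) w)
termination_by w.sum

/-- The standardization `Std(w)`: its `i`-th letter is `#{j : wⱼ ≤ wᵢ}`. -/
def stdW (w : List ℕ) : List ℕ := w.map (fun x => w.countP (fun y => decide (y ≤ x)))

/-- `v[k]`: shift every letter of `v` by `k`. -/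
def shiftW (k : ℕ) (v : List ℕ) : List ℕ := v.map (· + k)

/-- Shifted concatenation `u • v = u · v[k]`, `k = |u|`. -/
def sconc (u v : List ℕ) : List ℕ := u ++ shiftW u.length v

/-- The multiset of all shuffles of two words, counted with multiplicity. -/
def shuffles : List ℕ → List ℕ → Multiset (List ℕ)
  | [], v => {v}
  | x :: u, [] => {x :: u}
  | x :: u, y :: v =>
      (shuffles u (y :: v)).map (fun w => x :: w) + (shuffles (x :: u) v).map (fun w => y :: w)
termination_by u v => u.length + v.length

/-- Shifted shuffle `u ⋒ v`, a multiset of words. -/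
def sshuffle (u v : List ℕ) : Multiset (List ℕ) := shuffles u (shiftW u.length v)

/-- Iterated shifted shuffle `u₁ ⋒ u₂ ⋒ ⋯ ⋒ u_r`. -/
def itersShuffle : List (List ℕ) → Multiset (List ℕ)
  | [] => {[]}
  | u :: rest => (itersShuffle rest).bind (fun v => sshuffle u v)

/-- Lexicographic pair-encoding `a ⊛ b` of two words of length `n` with letters in `[n]`:
the `i`-th letter is `(aᵢ - 1)·n + bᵢ`. -/
def pairEnc (n : ℕ) (a b : List ℕ) : List ℕ := List.zipWith (fun x y => (x - 1) * n + y) a b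

/-- The internal product `a * b := Park(a ⊛ b)` of two parking functions of the same length. -/
noncomputable def iprod (a b : List ℕ) : List ℕ := park (pairEnc a.length a b)

/-- The word `1^m` of length `m` with all letters equal to `1`. -/
def onesW (m : ℕ) : List ℕ := List.replicate m 1

/-- The multiset (without repetition) of all words `a` with `a↑ = π`. -/
def classM (π : List ℕ) : Multiset (List ℕ) :=
  (↑(π.permutations.dedup) : Multiset (List ℕ)).filter (fun a => sortW a = π)

open Classical in
/-- The finite set of all parking functions of length `n`. -/
noncomputable def PFfin (n : ℕ) : Finset (List ℕ) :=
  ((Finset.univ : Finset (Fin n → Fin n)).image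
    (fun f => List.ofFn (fun i => (f i : ℕ) + 1))).filter IsPF

/-- Split a word into consecutive factors of the given lengths. -/
def splitFactors : List ℕ → List ℕ → List (List ℕ)
  | [], _ => []
  | k :: ks, e => e.take k :: splitFactors ks (e.drop k)

/-- Iterated shifted concatenation. -/
def sconcAll : List (List ℕ) → List ℕ
  | [] => []
  | u :: rest => sconc u (sconcAll rest)

/-- Multiset of tuples `(a₁, …, a_r)` (as lists) with `aᵢ↑ = πᵢ`. -/
def tuplesM : List (List ℕ) → Multiset (List (List ℕ))
  | [] => {[]}
  | p :: ps => (classM p).bind (fun a => (tuplesM ps).map (fun A => a :: A))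

/-- `π'` is a successor of `π`: the evaluation of `π'` is obtained from that of `π`
by merging two consecutive (modulo zeros) nonzero entries onto the left one. -/
def IsSuccEv (π π' : List ℕ) : Prop :=
  ∃ i j : ℕ, 1 ≤ i ∧ i < j ∧ π.count i ≠ 0 ∧ π.count j ≠ 0 ∧
    (∀ k, i < k → k < j → π.count k = 0) ∧
    (∀ m, π'.count m = if m = i then π.count i + π.count j else if m = j then 0 else π.count m)

/-- The partial order `π ⪯ π'`: reflexive–transitive closure of the successor relation. -/
def succeq (π π' : List ℕ) : Prop := Relation.ReflTransGen IsSuccEv π π'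

/-!
Cutting a shuffle of `a` and `b[k]` after `j` letters yields a shuffle of `a₁⋯aᵢ` and
`(b₁⋯b_{j-i})[k]` followed by a shuffle of the remaining suffixes, for the unique `i` counting
the letters taken from `a`. Hence the count factors once parkization is known to commute with
shifted shuffles: if `u` is a factor of a parking function of length `K` and `v` is positive, then
a shuffle of `u` and `v[K]` parkizes to the same shuffle of `Park(u)` and `Park(v)[|u|]`. Since
parkization only sees how many letters lie below each threshold, it commutes with interleaving,
so it suffices to treat `u · v[K]`; there the parkization steps first act on `u` while closing
the gap between `K` and `|u|`, and then act on `v[|u|]` alone.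
-/

section

open Finset

lemma Multiset.map_prodMap_product {α β γ : Type*} (f : α → γ) (s : Multiset α)
    (t : Multiset β) : (s ×ˢ t).map (Prod.map f id) = s.map f ×ˢ t := by
  induction s using Multiset.induction with
  | empty => simp
  | cons a s ih => simp [ih]

lemma Multiset.countP_product {α β : Type*} (p : α → Prop) (q : β → Prop) [DecidablePred p]
    [DecidablePred q] (s : Multiset α) (t : Multiset β) :
    (s ×ˢ t).countP (fun x => p x.1 ∧ q x.2) = s.countP p * t.countP q := by
  induction s using Multiset.induction with
  | empty => simp
  | cons a s ih =>
    rw [Multiset.cons_product, Multiset.countP_add, ih, Multiset.countP_map, Multiset.countP_cons]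
    by_cases ha : p a <;> simp [ha, Multiset.countP_eq_card_filter, add_mul, add_comm]

lemma Multiset.countP_eq_count_map {α β : Type*} [DecidableEq β] (f : α → β) (b : β)
    (s : Multiset α) : s.countP (fun x => f x = b) = (s.map f).count b := by
  rw [Multiset.count_map, Multiset.countP_eq_card_filter]
  simp only [eq_comm]

lemma sum_antidiagonal_ite_eq_sum_Icc {M : Type*} [AddCommMonoid M] (j k l : ℕ)
    (g : ℕ × ℕ → M) :
    ∑ p ∈ antidiagonal j, (if p.1 ≤ k ∧ p.2 ≤ l then g p else 0) =
      ∑ i ∈ Icc (j - l) (min j k), g (i, j - i) := by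
  rw [Nat.sum_antidiagonal_eq_sum_range_succ_mk, ← sum_filter]
  refine sum_congr (ext fun i => ?_) fun _ _ => rfl
  simp only [Finset.mem_filter, Finset.mem_range, Finset.mem_Icc]
  omega

end

lemma IsPF.le_countP {a : List ℕ} (ha : IsPF a) {t : ℕ} (ht : t ≤ a.length) :
    t ≤ a.countP (· ≤ t) := by
  have hlen : (sortW a).length = a.length := List.length_mergeSort a
  have htake : ((sortW a).take t).countP (· ≤ t) = t := by
    rw [List.countP_eq_length.mpr, List.length_take, hlen, min_eq_left ht]
    intro x hx
    obtain ⟨i, hi, rfl⟩ := List.getElem_of_mem hx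
    simp only [List.length_take, lt_min_iff] at hi
    have := ha.2 i (hlen ▸ hi.2)
    rw [List.getD_eq_getElem _ 0 hi.2] at this
    simp only [List.getElem_take, decide_eq_true_eq]
    omega
  rw [← (List.mergeSort_perm a _).countP_eq, ← sortW, ← List.take_append_drop t (sortW a),
    List.countP_append, htake]
  exact Nat.le_add_right _ _

lemma IsPF.add_length_le_of_sublist {a u : List ℕ} (ha : IsPF a) (hu : u <+ a) {t : ℕ}
    (ht : t ≤ a.length) : t + u.length ≤ u.countP (· ≤ t) + a.length := by
  obtain ⟨r, hr⟩ := hu.exists_perm_append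
  have ha_count := ha.le_countP ht
  have hr_count := List.countP_le_length (p := (· ≤ t)) (l := r)
  rw [hr.countP_eq, List.countP_append] at ha_count
  rw [hr.length_eq, List.length_append]
  omega

lemma one_le_dW (w : List ℕ) : 1 ≤ dW w := (Nat.sInf_mem ⟨_, mem_dW_set w⟩).1

lemma countP_le_dW_lt (w : List ℕ) : w.countP (· ≤ dW w) < dW w :=
  (Nat.sInf_mem ⟨_, mem_dW_set w⟩).2

lemma dW_le_length_add_one (w : List ℕ) : dW w ≤ w.length + 1 := Nat.sInf_le (mem_dW_set w)

lemma le_countP_of_lt_dW {w : List ℕ} {t : ℕ} (h : t < dW w) : t ≤ w.countP (· ≤ t) := by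
  rcases Nat.eq_zero_or_pos t with rfl | ht
  · exact Nat.zero_le _
  · have := Nat.notMem_of_lt_sInf h
    simp only [Set.mem_ofPred_eq, not_and, not_lt] at this
    exact this ht

lemma dW_eq_of_le_countP {w : List ℕ} {d : ℕ} (hd : 1 ≤ d) (hlt : w.countP (· ≤ d) < d)
    (hle : ∀ t < d, t ≤ w.countP (· ≤ t)) : dW w = d := by
  refine le_antisymm (Nat.sInf_le ⟨hd, hlt⟩) (not_lt.mp fun h => ?_)
  have := hle _ h
  have := countP_le_dW_lt w
  omega

lemma dW_congr {w w' : List ℕ} (h : ∀ t, w.countP (· ≤ t) = w'.countP (· ≤ t)) :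
    dW w = dW w' := by
  simp only [dW, h]

lemma forall_mem_le_of_length_le_countP {w : List ℕ} {t : ℕ}
    (h : w.length ≤ w.countP (· ≤ t)) : ∀ x ∈ w, x ≤ t := by
  have := List.countP_eq_length.mp (le_antisymm List.countP_le_length h)
  simpa using this

lemma forall_mem_le_length_of_length_lt_dW {w : List ℕ} (h : w.length < dW w) :
    ∀ x ∈ w, x ≤ w.length :=
  forall_mem_le_of_length_le_countP (le_countP_of_lt_dW h)

lemma length_decAbove (d : ℕ) (w : List ℕ) : (decAbove d w).length = w.length := by
  simp [decAbove]

lemma decAbove_append (d : ℕ) (u v : List ℕ) :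
    decAbove d (u ++ v) = decAbove d u ++ decAbove d v := by
  simp [decAbove]

lemma decAbove_eq_self {d : ℕ} {w : List ℕ} (h : ∀ x ∈ w, x ≤ d) : decAbove d w = w :=
  (List.map_congr_left fun x hx => if_neg (not_lt.mpr (h x hx))).trans (List.map_id w)

lemma one_le_of_mem_decAbove {d : ℕ} {w : List ℕ} (hd : 1 ≤ d) (hw : ∀ x ∈ w, 1 ≤ x) :
    ∀ x ∈ decAbove d w, 1 ≤ x := by
  simp only [decAbove, List.mem_map, forall_exists_index, and_imp, forall_apply_eq_imp_iff₂]
  intro x hx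
  have := hw x hx
  split <;> omega

lemma countP_decAbove_of_lt {t d : ℕ} (h : t < d) (w : List ℕ) :
    (decAbove d w).countP (· ≤ t) = w.countP (· ≤ t) := by
  rw [decAbove, List.countP_map]
  exact List.countP_congr fun x _ => by simp only [Function.comp, decide_eq_true_eq]; split <;> omega

lemma countP_decAbove_of_le {t d : ℕ} (h : d ≤ t) (w : List ℕ) :
    (decAbove d w).countP (· ≤ t) = w.countP (· ≤ t + 1) := by
  rw [decAbove, List.countP_map]
  exact List.countP_congr fun x _ => by simp only [Function.comp, decide_eq_true_eq]; split <;> omega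

lemma park_eq_self {w : List ℕ} (h : dW w = w.length + 1) : park w = w := by
  rw [park, dif_pos h]

lemma park_eq_park_decAbove {w : List ℕ} (h : dW w ≠ w.length + 1) :
    park w = park (decAbove (dW w) w) := by
  rw [park, dif_neg h]

lemma park_decAbove_dW (w : List ℕ) : park (decAbove (dW w) w) = park w := by
  by_cases h : dW w = w.length + 1
  · rw [decAbove_eq_self fun x hx => (forall_mem_le_length_of_length_lt_dW (by omega) x hx).trans
      (by omega)]
  · rw [park_eq_park_decAbove h]

lemma length_park (w : List ℕ) : (park w).length = w.length := by
  induction h : w.sum using Nat.strong_induction_on generalizing w with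
  | _ N ih =>
    by_cases hw : dW w = w.length + 1
    · rw [park_eq_self hw]
    · rw [park_eq_park_decAbove hw, ih _ (h ▸ decAbove_sum_lt hw) _ rfl, length_decAbove]

lemma length_shiftW (K : ℕ) (v : List ℕ) : (shiftW K v).length = v.length := by
  simp [shiftW]

lemma take_shiftW (K i : ℕ) (v : List ℕ) : (shiftW K v).take i = shiftW K (v.take i) :=
  (List.map_take ..).symm

lemma drop_shiftW (K i : ℕ) (v : List ℕ) : (shiftW K v).drop i = shiftW K (v.drop i) :=
  (List.map_drop ..).symm

lemma countP_shiftW_eq_zero {t K : ℕ} (h : t ≤ K) {v : List ℕ} (hv : ∀ x ∈ v, 1 ≤ x) :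
    (shiftW K v).countP (· ≤ t) = 0 := by
  simp only [shiftW, List.countP_map, List.countP_eq_zero, Function.comp, decide_eq_true_eq]
  intro x hx
  have := hv x hx
  omega

lemma countP_shiftW_of_le {t K : ℕ} (h : K ≤ t) (v : List ℕ) :
    (shiftW K v).countP (· ≤ t) = v.countP (· ≤ t - K) := by
  rw [shiftW, List.countP_map]
  exact List.countP_congr fun x _ => by simp only [Function.comp, decide_eq_true_eq]; omega

lemma decAbove_shiftW_succ {d K : ℕ} (hd : d ≤ K + 1) {v : List ℕ} (hv : ∀ x ∈ v, 1 ≤ x) :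
    decAbove d (shiftW (K + 1) v) = shiftW K v := by
  simp only [decAbove, shiftW, List.map_map]
  refine List.map_congr_left fun x hx => ?_
  have := hv x hx
  simp only [Function.comp, if_pos (show d < x + (K + 1) by omega)]
  omega

lemma decAbove_add_shiftW (K d : ℕ) (v : List ℕ) :
    decAbove (K + d) (shiftW K v) = shiftW K (decAbove d v) := by
  simp only [decAbove, shiftW, List.map_map]
  refine List.map_congr_left fun x _ => ?_
  simp only [Function.comp]
  split_ifs <;> omega

lemma dW_append_shiftW_of_dW_le {u v : List ℕ} {K : ℕ} (hd : dW u ≤ K) (hv : ∀ x ∈ v, 1 ≤ x) :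
    dW (u ++ shiftW K v) = dW u := by
  refine dW_eq_of_le_countP (one_le_dW u) ?_ fun t ht => ?_
  · rw [List.countP_append, countP_shiftW_eq_zero hd hv]
    exact countP_le_dW_lt u
  · rw [List.countP_append, countP_shiftW_eq_zero (by omega) hv]
    exact le_countP_of_lt_dW ht

lemma dW_append_shiftW_length {u v : List ℕ} (hu : dW u = u.length + 1) :
    dW (u ++ shiftW u.length v) = u.length + dW v := by
  have hle : ∀ x ∈ u, x ≤ u.length := forall_mem_le_length_of_length_lt_dW (by omega)
  have hcount : ∀ t, u.length ≤ t → u.countP (· ≤ t) = u.length := fun t ht =>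
    List.countP_eq_length.mpr fun x hx => by simpa using (hle x hx).trans ht
  refine dW_eq_of_le_countP (by have := one_le_dW v; omega) ?_ fun t ht => ?_
  · rw [List.countP_append, countP_shiftW_of_le (by omega), hcount _ (by omega),
      Nat.add_sub_cancel_left]
    have := countP_le_dW_lt v
    omega
  · rw [List.countP_append]
    by_cases htu : t ≤ u.length
    · exact (le_countP_of_lt_dW (by omega : t < dW u)).trans (Nat.le_add_right _ _)
    · rw [countP_shiftW_of_le (by omega), hcount _ (by omega)]
      have := le_countP_of_lt_dW (by omega : t - u.length < dW v)
      omega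

lemma park_append_shiftW_length {u : List ℕ} (hu : dW u = u.length + 1) (v : List ℕ) :
    park (u ++ shiftW u.length v) = u ++ shiftW u.length (park v) := by
  induction h : v.sum using Nat.strong_induction_on generalizing v with
  | _ N ih =>
    have hdW := dW_append_shiftW_length (v := v) hu
    by_cases hv : dW v = v.length + 1
    · rw [park_eq_self hv, park_eq_self (by simp [hdW, hv, length_shiftW]; omega)]
    · have hle : ∀ x ∈ u, x ≤ u.length := forall_mem_le_length_of_length_lt_dW (by omega)
      have hdec : decAbove (dW (u ++ shiftW u.length v)) (u ++ shiftW u.length v)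
          = u ++ shiftW u.length (decAbove (dW v) v) := by
        rw [hdW, decAbove_append, decAbove_add_shiftW, decAbove_eq_self fun x hx =>
          (hle x hx).trans (Nat.le_add_right _ _)]
      rw [← park_decAbove_dW, hdec, ih _ (h ▸ decAbove_sum_lt hv) _ rfl, park_decAbove_dW]

/-- The hypothesis `hK` says that `u · 1^(K - |u|)` is a parking function; it holds for every
factor `u` of a parking function of length `K`. -/
lemma park_append_shiftW {u v : List ℕ} {K : ℕ} (hu : ∀ x ∈ u, 1 ≤ x)
    (hK : ∀ t ≤ K, t + u.length ≤ u.countP (· ≤ t) + K) (hv : ∀ x ∈ v, 1 ≤ x) :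
    park (u ++ shiftW K v) = park u ++ shiftW u.length (park v) := by
  induction K using Nat.strong_induction_on generalizing u with
  | _ K ih =>
    have hd1 := one_le_dW u
    by_cases hd : dW u ≤ K
    · obtain ⟨K, rfl⟩ : ∃ K', K = K' + 1 := ⟨K - 1, by omega⟩
      have hlt := countP_le_dW_lt u
      have hKd := hK _ hd
      have hK' : ∀ t ≤ K, t + (decAbove (dW u) u).length
          ≤ (decAbove (dW u) u).countP (· ≤ t) + K := by
        intro t ht
        rw [length_decAbove]
        rcases lt_or_ge t (dW u) with htd | htd
        · rw [countP_decAbove_of_lt htd]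
          have := le_countP_of_lt_dW htd
          omega
        · rw [countP_decAbove_of_le htd]
          have := hK (t + 1) (by omega)
          omega
      rw [← park_decAbove_dW, dW_append_shiftW_of_dW_le hd hv, decAbove_append,
        decAbove_shiftW_succ hd hv, ih K (by omega) (one_le_of_mem_decAbove hd1 hu) hK',
        length_decAbove, park_decAbove_dW]
    · have hKu : K ≤ u.countP (· ≤ K) := le_countP_of_lt_dW (by omega)
      have hu0 : u.countP (· ≤ 0) = 0 :=
        List.countP_eq_zero.mpr fun x hx => by have := hu x hx; simp only [decide_eq_true_eq]; omega
      have hK0 := hK 0 (Nat.zero_le _)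
      have hKlen := List.countP_le_length (p := (· ≤ K)) (l := u)
      have hlen : K = u.length := by omega
      have hparked : dW u = u.length + 1 := by have := dW_le_length_add_one u; omega
      rw [hlen, park_append_shiftW_length hparked, park_eq_self hparked]

def interleaveBy : List Bool → List ℕ → List ℕ → List ℕ
  | true :: m, x :: u, v => x :: interleaveBy m u v
  | false :: m, u, y :: v => y :: interleaveBy m u v
  | _, _, _ => []

def masks : ℕ → ℕ → List (List Bool)
  | 0, q => [List.replicate q false]
  | p + 1, 0 => [List.replicate (p + 1) true]
  | p + 1, q + 1 => (masks p (q + 1)).map (true :: ·) ++ (masks (p + 1) q).map (false :: ·)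

lemma interleaveBy_replicate_false (v : List ℕ) :
    interleaveBy (List.replicate v.length false) [] v = v := by
  induction v with
  | nil => rfl
  | cons y v ih => simpa [interleaveBy, List.replicate_succ] using ih

lemma interleaveBy_replicate_true (u : List ℕ) :
    interleaveBy (List.replicate u.length true) u [] = u := by
  induction u with
  | nil => rfl
  | cons x u ih => simpa [interleaveBy, List.replicate_succ] using ih

lemma shuffles_eq_map_interleaveBy (u v : List ℕ) :
    shuffles u v = ((masks u.length v.length).map (interleaveBy · u v) : Multiset (List ℕ)) := by
  induction u generalizing v with
  | nil => simp [shuffles, masks, interleaveBy_replicate_false]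
  | cons x u ihu =>
    induction v with
    | nil => simpa [shuffles, masks] using (interleaveBy_replicate_true (x :: u)).symm
    | cons y v ihv =>
      rw [shuffles, ihu, ihv]
      simp [masks, Function.comp_def, interleaveBy]

lemma count_of_mem_masks {p q : ℕ} {m : List Bool} (hm : m ∈ masks p q) :
    m.count true = p ∧ m.count false = q := by
  induction p generalizing q m with
  | zero => simp_all [masks, List.count_replicate]
  | succ p ihp =>
    induction q generalizing m with
    | zero => simp_all [masks, List.count_replicate]
    | succ q ihq =>
      simp only [masks, List.mem_append, List.mem_map] at hm
      rcases hm with ⟨m, hm, rfl⟩ | ⟨m, hm, rfl⟩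
      · simp [ihp hm]
      · simp [ihq hm]

lemma map_interleaveBy (f : ℕ → ℕ) (m : List Bool) (u v : List ℕ) :
    (interleaveBy m u v).map f = interleaveBy m (u.map f) (v.map f) := by
  induction m generalizing u v with
  | nil => simp [interleaveBy]
  | cons b m ih => cases b <;> cases u <;> cases v <;> simp [interleaveBy, ih]

lemma countP_interleaveBy (p : ℕ → Bool) {m : List Bool} {u v : List ℕ}
    (hu : m.count true = u.length) (hv : m.count false = v.length) :
    (interleaveBy m u v).countP p = u.countP p + v.countP p := by
  induction m generalizing u v with
  | nil =>
    obtain rfl : u = [] := List.eq_nil_of_length_eq_zero (by simpa using hu.symm)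
    obtain rfl : v = [] := List.eq_nil_of_length_eq_zero (by simpa using hv.symm)
    rfl
  | cons b m ih =>
    cases b <;> cases u <;> cases v <;> simp_all [interleaveBy, List.countP_cons] <;> omega

lemma length_interleaveBy {m : List Bool} {u v : List ℕ}
    (hu : m.count true = u.length) (hv : m.count false = v.length) :
    (interleaveBy m u v).length = u.length + v.length := by
  simpa using countP_interleaveBy (fun _ => true) hu hv

lemma decAbove_interleaveBy (d : ℕ) (m : List Bool) (u v : List ℕ) :
    decAbove d (interleaveBy m u v) = interleaveBy m (decAbove d u) (decAbove d v) :=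
  map_interleaveBy _ m u v

lemma park_interleaveBy {m : List Bool} {u v : List ℕ}
    (hu : m.count true = u.length) (hv : m.count false = v.length) :
    park (interleaveBy m u v) =
      interleaveBy m ((park (u ++ v)).take u.length) ((park (u ++ v)).drop u.length) := by
  induction h : (u ++ v).sum using Nat.strong_induction_on generalizing u v with
  | _ N ih =>
    have hdW : dW (interleaveBy m u v) = dW (u ++ v) :=
      dW_congr fun t => by rw [countP_interleaveBy _ hu hv, List.countP_append]
    have hlen := length_interleaveBy hu hv
    by_cases hp : dW (u ++ v) = (u ++ v).length + 1
    · rw [park_eq_self hp, park_eq_self (by simp_all), List.take_left, List.drop_left]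
    · rw [park_eq_park_decAbove (by simp_all), park_eq_park_decAbove hp, hdW,
        decAbove_interleaveBy, decAbove_append,
        ih _ (h ▸ decAbove_sum_lt hp) (by rwa [length_decAbove]) (by rwa [length_decAbove])
          (by rw [← decAbove_append]), length_decAbove]

lemma map_park_shuffles_shiftW {u v : List ℕ} {K : ℕ} (hu : ∀ x ∈ u, 1 ≤ x)
    (hK : ∀ t ≤ K, t + u.length ≤ u.countP (· ≤ t) + K) (hv : ∀ x ∈ v, 1 ≤ x) :
    (shuffles u (shiftW K v)).map park = sshuffle (park u) (park v) := by
  rw [sshuffle, shuffles_eq_map_interleaveBy, shuffles_eq_map_interleaveBy, Multiset.map_coe,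
    List.map_map, length_park, length_shiftW, length_shiftW, length_park]
  congr 1
  refine List.map_congr_left fun m hm => ?_
  obtain ⟨hmu, hmv⟩ := count_of_mem_masks hm
  rw [Function.comp, park_interleaveBy hmu (by rw [hmv, length_shiftW]),
    park_append_shiftW hu hK hv, List.take_left' (length_park u),
    List.drop_left' (length_park u)]

section Deconcatenation

open Finset

lemma shuffles_nil_left (v : List ℕ) : shuffles [] v = {v} := by rw [shuffles]

lemma shuffles_nil_right (u : List ℕ) : shuffles u [] = {u} := by cases u <;> rw [shuffles]

def splitShuffles (u v : List ℕ) (p : ℕ × ℕ) : Multiset (List ℕ × List ℕ) :=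
  if p.1 ≤ u.length ∧ p.2 ≤ v.length then
    shuffles (u.take p.1) (v.take p.2) ×ˢ shuffles (u.drop p.1) (v.drop p.2)
  else 0

lemma splitShuffles_cons_cons (x y : ℕ) (u v : List ℕ) {p : ℕ × ℕ} (hp : p ≠ (0, 0)) :
    splitShuffles (x :: u) (y :: v) p =
      (if 0 < p.1 then (splitShuffles u (y :: v) (p.1 - 1, p.2)).map (Prod.map (x :: ·) id)
        else 0) +
      (if 0 < p.2 then (splitShuffles (x :: u) v (p.1, p.2 - 1)).map (Prod.map (y :: ·) id)
        else 0) := by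
  obtain ⟨_ | i, _ | i'⟩ := p
  · exact absurd rfl hp
  all_goals
    simp only [splitShuffles, List.length_cons, List.take_succ_cons, List.drop_succ_cons,
      List.take_zero, List.drop_zero, Nat.add_le_add_iff_right, Nat.zero_le, true_and, and_true,
      lt_self_iff_false, Nat.zero_lt_succ, if_true, if_false, Nat.add_sub_cancel]
    split_ifs <;>
      simp [shuffles, shuffles_nil_left, shuffles_nil_right, Multiset.map_prodMap_product]

lemma map_take_drop_shuffles {u v : List ℕ} {j : ℕ} (hj : j ≤ u.length + v.length) :
    (shuffles u v).map (fun c => (c.take j, c.drop j)) =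
      ∑ p ∈ antidiagonal j, splitShuffles u v p := by
  induction u generalizing v j with
  | nil =>
    rw [Finset.sum_eq_single (0, j)]
    · simp_all [splitShuffles, shuffles_nil_left]
    · refine fun p hp hp0 => if_neg fun h => hp0 ?_
      ext <;> simp at hp h ⊢ <;> omega
    · simp
  | cons x u ihu =>
    induction v generalizing j with
    | nil =>
      rw [Finset.sum_eq_single (j, 0)]
      · simp_all [splitShuffles, shuffles_nil_right]
      · refine fun p hp hp0 => if_neg fun h => hp0 ?_
        ext <;> simp at hp h ⊢ <;> omega
      · simp
    | cons y v ihv =>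
      rcases j with _ | j
      · simp [splitShuffles, shuffles_nil_left, ← Multiset.cons_zero]
      · have hsplit : ∀ p ∈ antidiagonal (j + 1), p ≠ (0, 0) := fun p hp h => by
          simp [h] at hp
        simp only [List.length_cons] at hj ihv
        rw [Finset.sum_congr rfl fun p hp => splitShuffles_cons_cons x y u v (hsplit p hp),
          Finset.sum_add_distrib, Nat.sum_antidiagonal_succ, Nat.sum_antidiagonal_succ', shuffles,
          Multiset.map_add, Multiset.map_map, Multiset.map_map]
        simp only [lt_self_iff_false, if_false, zero_add, Nat.add_one_sub_one,
          Nat.zero_lt_succ, if_true]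
        have hcons : ∀ z : ℕ, (fun c : List ℕ => (c.take (j + 1), c.drop (j + 1))) ∘ (z :: ·)
            = Prod.map (z :: ·) id ∘ fun c => (c.take j, c.drop j) := fun _ => rfl
        rw [hcons, hcons, ← Multiset.map_map, ← Multiset.map_map, ihu (by simp; omega),
          ihv (by omega)]
        congr 1 <;> exact map_sum (Multiset.mapAddMonoidHom _) _ _

end Deconcatenation

lemma countP_park_splitShuffles {a b : List ℕ} (ha : IsPF a) (hb : ∀ x ∈ b, 1 ≤ x)
    (e f : List ℕ) (p : ℕ × ℕ) :
    (splitShuffles a (shiftW a.length b) p).countP (fun c => park c.1 = e ∧ park c.2 = f) =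
      if p.1 ≤ a.length ∧ p.2 ≤ b.length then
        (sshuffle (park (a.take p.1)) (park (b.take p.2))).count e *
          (sshuffle (park (a.drop p.1)) (park (b.drop p.2))).count f
      else 0 := by
  rw [splitShuffles, length_shiftW]
  split_ifs
  · rw [Multiset.countP_product (park · = e) (park · = f), take_shiftW, drop_shiftW,
      Multiset.countP_eq_count_map, Multiset.countP_eq_count_map,
      map_park_shuffles_shiftW (fun x hx => ha.1 x (List.mem_of_mem_take hx))
        (fun _ => ha.add_length_le_of_sublist (List.take_sublist _ _))
        (fun x hx => hb x (List.mem_of_mem_take hx)),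
      map_park_shuffles_shiftW (fun x hx => ha.1 x (List.mem_of_mem_drop hx))
        (fun _ => ha.add_length_le_of_sublist (List.drop_sublist _ _))
        (fun x hx => hb x (List.mem_of_mem_drop hx))]
  · rfl

open Classical in
theorem bialgebra_compatibility_general (k l n j : ℕ) (hn : n = k + l) (hj : j ≤ n)
    (a b e f : List ℕ) (ha : IsPF a) (hla : a.length = k)
    (hb : IsPF b) (hlb : b.length = l) :
    Multiset.card ((sshuffle a b).filter
        (fun c => park (c.take j) = e ∧ park (c.drop j) = f))
      = ∑ i ∈ Finset.Icc (j - l) (min j k),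
          (Multiset.count e (sshuffle (park (a.take i)) (park (b.take (j - i))))) *
          (Multiset.count f (sshuffle (park (a.drop i)) (park (b.drop (j - i))))) := by
  subst hn hla hlb
  open Finset in
  calc _ = ((shuffles a (shiftW a.length b)).map fun c => (c.take j, c.drop j)).countP
          (fun c => park c.1 = e ∧ park c.2 = f) := (Multiset.countP_map ..).symm
    _ = ∑ p ∈ antidiagonal j, (splitShuffles a (shiftW a.length b) p).countP
          (fun c => park c.1 = e ∧ park c.2 = f) := by
      rw [map_take_drop_shuffles (by rw [length_shiftW]; omega)]
      exact map_sum (Multiset.countPAddMonoidHom _) _ _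
    _ = _ := by
      rw [sum_congr rfl fun p _ => countP_park_splitShuffles ha hb.1 e f p,
        sum_antidiagonal_ite_eq_sum_Icc]

open Classical in
/-- bialgebra compatibility of PQSym: for `a ∈ PF_k`, `b ∈ PF_l`,
`n = k + l`, `0 ≤ j ≤ n`, `e ∈ PF_j` and `f ∈ PF_{n-j}`, the number (with shuffle
multiplicity) of words `c ∈ a ⋒ b` with `Park(c₁⋯c_j) = e` and `Park(c_{j+1}⋯c_n) = f`
equals `Σ_i M₁(i) M₂(i)` where `i` ranges over `max(0, j-l) ≤ i ≤ min(j, k)`,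
`M₁(i)` is the multiplicity of `e` in `Park(a₁⋯a_i) ⋒ Park(b₁⋯b_{j-i})` and `M₂(i)` is
the multiplicity of `f` in `Park(a_{i+1}⋯a_k) ⋒ Park(b_{j-i+1}⋯b_l)`. -/
theorem bialgebra_compatibility (k l n j : ℕ) (hn : n = k + l) (hj : j ≤ n)
    (a b e f : List ℕ) (ha : IsPF a) (hla : a.length = k)
    (hb : IsPF b) (hlb : b.length = l)
    (he : IsPF e) (hle : e.length = j) (hf : IsPF f) (hlf : f.length = n - j) :
    Multiset.card ((sshuffle a b).filter
        (fun c => park (c.take j) = e ∧ park (c.drop j) = f))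
      = ∑ i ∈ Finset.Icc (j - l) (min j k),
          (Multiset.count e (sshuffle (park (a.take i)) (park (b.take (j - i))))) *
          (Multiset.count f (sshuffle (park (a.drop i)) (park (b.drop (j - i))))) :=
  bialgebra_compatibility_general k l n j hn hj a b e f ha hla hb hlb
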